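/- Let ψ : [1,∞) → ℝ be positive, convex, differentiable with ψ'(t) < 0 for all t ≥ 1, and ψ(t) → 0 as t → ∞; set λ(t) = ψ(t)/|ψ'(t)| and α(t) = ψ(t)/(t·|ψ'(t)|). Assume λ is nondecreasing on [1,∞) and α is nonincreasing on [1,∞). Then for every a ≥ 1 with α(a) < 1, the integral ∫_a^∞ ψ(t) dt is finite and λ(a)·ψ(a) ≤ ∫_a^∞ ψ(t) dt ≤ λ(a)·ψ(a)·(1 + α(a)/(1 − α(a))). -/

import Mathlib

/-!
Write `λ(a) = ψ(a)/|ψ'(a)|` and `α(a) = ψ(a)/(a|ψ'(a)|)`, so that `λ(a) = a α(a)`.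
Since `λ` is nondecreasing, `ψ ≥ λ(a)(-ψ')` on `[a, ∞)`, and integrating (using `ψ → 0`) gives
`∫_a^∞ ψ ≥ λ(a)ψ(a)`. Since `α` is nonincreasing, `ψ(t) ≤ α(a) t (-ψ'(t))`, which rearranges to
`(1 - α(a)) ψ ≤ -α(a) (t ψ)'`; integrating over `[a, T]` and discarding `T ψ(T) ≥ 0` bounds every
partial integral, hence the improper one, by `α(a) a ψ(a) / (1 - α(a)) = λ(a)ψ(a)/(1 - α(a))`.
-/

open MeasureTheory Real Filter Set Topology

section ImproperIntegralComparison

variable {f g g' : ℝ → ℝ} {a : ℝ}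

theorem le_setIntegral_Ioi_of_neg_deriv_le (hg : ∀ t ∈ Ici a, HasDerivAt g (g' t) t)
    (hg' : ∀ t ∈ Ioi a, g' t ≤ 0) (hlim : Tendsto g atTop (𝓝 0)) (hf : IntegrableOn f (Ioi a))
    (hgf : ∀ t ∈ Ioi a, -g' t ≤ f t) : g a ≤ ∫ t in Ioi a, f t := by
  have hg'_int : IntegrableOn g' (Ioi a) := integrableOn_Ioi_deriv_of_nonpos' hg hg' hlim
  calc g a = ∫ t in Ioi a, -g' t := by
        rw [integral_neg, integral_Ioi_of_hasDerivAt_of_nonpos' hg hg' hlim, zero_sub, neg_neg]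
    _ ≤ ∫ t in Ioi a, f t := setIntegral_mono_on hg'_int.neg hf measurableSet_Ioi hgf

theorem intervalIntegral_le_of_le_neg_deriv (hf : ContinuousOn f (Ici a))
    (hg : ∀ t ∈ Ici a, HasDerivAt g (g' t) t) (hfg : ∀ t ∈ Ici a, f t ≤ -g' t)
    (hg0 : ∀ t ∈ Ici a, 0 ≤ g t) {T : ℝ} (hT : a ≤ T) : ∫ t in a..T, f t ≤ g a := by
  have hIcc : Icc a T ⊆ Ici a := Icc_subset_Ici_self
  have h := intervalIntegral.integral_le_sub_of_hasDeriv_right_of_le (g := fun t => -g t) hT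
    (fun t ht => (hg t (hIcc ht)).neg.continuousAt.continuousWithinAt)
    (fun t ht => (hg t (hIcc (Ioo_subset_Icc_self ht))).neg.hasDerivWithinAt)
    (hf.mono hIcc).integrableOn_Icc (fun t ht => hfg t (hIcc (Ioo_subset_Icc_self ht)))
  linarith [hg0 T hT]

theorem integrableOn_Ioi_of_le_neg_deriv (hf : ContinuousOn f (Ici a))
    (hg : ∀ t ∈ Ici a, HasDerivAt g (g' t) t) (hf0 : ∀ t ∈ Ici a, 0 ≤ f t)
    (hfg : ∀ t ∈ Ici a, f t ≤ -g' t) (hg0 : ∀ t ∈ Ici a, 0 ≤ g t) :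
    IntegrableOn f (Ioi a) := by
  refine integrableOn_Ioi_of_intervalIntegral_norm_bounded (g a) a (fun T => ?_) tendsto_id ?_
  · exact (hf.mono Icc_subset_Ici_self).integrableOn_Icc.mono_set Ioc_subset_Icc_self
  · filter_upwards [eventually_ge_atTop a] with T hT
    rw [intervalIntegral.integral_congr (g := f) fun t ht => ?_]
    · exact intervalIntegral_le_of_le_neg_deriv hf hg hfg hg0 hT
    · rw [id, uIcc_of_le hT] at ht
      exact Real.norm_of_nonneg (hf0 t ht.1)

theorem setIntegral_Ioi_le_of_le_neg_deriv (hf : ContinuousOn f (Ici a))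
    (hg : ∀ t ∈ Ici a, HasDerivAt g (g' t) t) (hf0 : ∀ t ∈ Ici a, 0 ≤ f t)
    (hfg : ∀ t ∈ Ici a, f t ≤ -g' t) (hg0 : ∀ t ∈ Ici a, 0 ≤ g t) :
    ∫ t in Ioi a, f t ≤ g a :=
  le_of_tendsto (intervalIntegral_tendsto_integral_Ioi a
      (integrableOn_Ioi_of_le_neg_deriv hf hg hf0 hfg hg0) tendsto_id)
    (eventually_ge_atTop a |>.mono fun _ hT => intervalIntegral_le_of_le_neg_deriv hf hg hfg hg0 hT)

end ImproperIntegralComparison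

theorem neg_mul_le_of_le_div_abs {L x y : ℝ} (hy : y < 0) (h : L ≤ x / |y|) : -(L * y) ≤ x := by
  rw [abs_of_neg hy, le_div_iff₀ (neg_pos.2 hy)] at h
  linarith

theorem le_neg_mul_add_mul_of_div_mul_abs_le {A t x y : ℝ} (hA : A < 1) (ht : 0 < t) (hy : y < 0)
    (h : x / (t * |y|) ≤ A) : x ≤ -(A / (1 - A) * (x + t * y)) := by
  rw [abs_of_neg hy, div_le_iff₀ (mul_pos ht (neg_pos.2 hy))] at h
  rw [div_mul_eq_mul_div, ← neg_div, le_div_iff₀ (sub_pos.2 hA)]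
  linarith

theorem integral_psi_two_sided (ψ ψ' : ℝ → ℝ)
    (hpos : ∀ t, 1 ≤ t → 0 < ψ t)
    (hderiv : ∀ t, 1 ≤ t → HasDerivAt ψ (ψ' t) t)
    (hneg : ∀ t, 1 ≤ t → ψ' t < 0)
    (hlim : Filter.Tendsto ψ Filter.atTop (nhds 0))
    (hlam_mono : ∀ s t, 1 ≤ s → s ≤ t → ψ s / |ψ' s| ≤ ψ t / |ψ' t|)
    (halp_anti : ∀ s t, 1 ≤ s → s ≤ t → ψ t / (t * |ψ' t|) ≤ ψ s / (s * |ψ' s|))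
    (a : ℝ) (ha : 1 ≤ a) (hαa : ψ a / (a * |ψ' a|) < 1) :
    MeasureTheory.IntegrableOn ψ (Set.Ici a) ∧
      ψ a / |ψ' a| * ψ a ≤ (∫ t in Set.Ici a, ψ t) ∧
      (∫ t in Set.Ici a, ψ t) ≤
        ψ a / |ψ' a| * ψ a * (1 + (ψ a / (a * |ψ' a|)) / (1 - ψ a / (a * |ψ' a|))) := by
  set L := ψ a / |ψ' a|
  set A := ψ a / (a * |ψ' a|)
  set c := A / (1 - A)
  have h1 : ∀ t ∈ Ici a, 1 ≤ t := fun t ht => ha.trans ht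
  have hderiv' : ∀ t ∈ Ici a, HasDerivAt ψ (ψ' t) t := fun t ht => hderiv t (h1 t ht)
  have hneg' : ∀ t ∈ Ici a, ψ' t < 0 := fun t ht => hneg t (h1 t ht)
  have hψ_nonneg : ∀ t ∈ Ici a, 0 ≤ ψ t := fun t ht => (hpos t (h1 t ht)).le
  have hψ_cont : ContinuousOn ψ (Ici a) :=
    fun t ht => (hderiv' t ht).continuousAt.continuousWithinAt
  have hψ_le : ∀ t ∈ Ici a, ψ t ≤ -(c * (ψ t + t * ψ' t)) := fun t ht =>
    le_neg_mul_add_mul_of_div_mul_abs_le hαa (by linarith [h1 t ht]) (hneg' t ht)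
      (halp_anti a t ha ht)
  have htψ_deriv : ∀ t ∈ Ici a, HasDerivAt (fun t => c * (t * ψ t)) (c * (ψ t + t * ψ' t)) t :=
    fun t ht => by simpa using ((hasDerivAt_id' t).mul (hderiv' t ht)).const_mul c
  have htψ_nonneg : ∀ t ∈ Ici a, 0 ≤ c * (t * ψ t) := fun t ht =>
    mul_nonneg (div_nonneg (div_nonneg (hψ_nonneg a self_mem_Ici) (by positivity))
      (sub_pos.2 hαa).le) (mul_nonneg (by linarith [h1 t ht]) (hψ_nonneg t ht))
  have hint : IntegrableOn ψ (Ioi a) :=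
    integrableOn_Ioi_of_le_neg_deriv hψ_cont htψ_deriv hψ_nonneg hψ_le htψ_nonneg
  rw [integral_Ici_eq_integral_Ioi]
  refine ⟨(integrableOn_Ici_iff_integrableOn_Ioi).2 hint, ?_, ?_⟩
  · refine le_setIntegral_Ioi_of_neg_deriv_le (g := fun t => L * ψ t)
      (fun t ht => (hderiv' t ht).const_mul L) (fun t (ht : a < t) => ?_)
      (by simpa using hlim.const_mul L) hint
      (fun t (ht : a < t) => neg_mul_le_of_le_div_abs (hneg' t ht.le) (hlam_mono a t ha ht.le))
    exact mul_nonpos_of_nonneg_of_nonpos (div_nonneg (hψ_nonneg a self_mem_Ici) (abs_nonneg _))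
      (hneg' t ht.le).le
  · convert setIntegral_Ioi_le_of_le_neg_deriv hψ_cont htψ_deriv hψ_nonneg hψ_le htψ_nonneg
      using 1
    have hAL : A * a = L := by simp only [A, L]; field_simp
    rw [← hAL, one_add_div (sub_pos.2 hαa).ne']
    ring
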